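/- Under the standing hypotheses (including the additional ones for the degree-two maps), define 𝐛₂^V : X⊗X → Y by 𝐛₂^V := b₁^V∘Δ₂^W∘(𝐛₁^V⊗𝐛₁^V) + b₂^V∘(𝚫₁^W⊗𝚫₁^W) (values in C ⊆ Y, with Δ₂^W composed with the inclusion C′ ⊆ Z). Then 𝐛₂^V∘(m₁^{V⊙W}⊗id_X) + 𝐛₂^V∘(id_X⊗m₁^{V⊙W}) + 𝐛₁^V∘m₂^{V⊙W} + m₂^W∘(𝐛₁^V⊗𝐛₁^V) + m₁^W∘𝐛₂^V = 0 as maps X⊗X → Y. (Equation (36) in the proof of Proposition 6.1 of the paper; it implies that the transfer map 𝐛₁^V preserves the product structures in homology.) -/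

import Mathlib

open TensorProduct

namespace LegoutStmt7

variable {P Q C C' : Type*}
  [AddCommGroup P] [Module (ZMod 2) P]
  [AddCommGroup Q] [Module (ZMod 2) Q]
  [AddCommGroup C] [Module (ZMod 2) C]
  [AddCommGroup C'] [Module (ZMod 2) C']

/-- `𝚫₁^W : X = P ⊕ Q → Z = C′ ⊕ Q`, `p + q ↦ Δ₁^W(p) + q`. -/
def boldDelta1W (Δ1W : P →ₗ[ZMod 2] C') : (P × Q) →ₗ[ZMod 2] C' × Q :=
  LinearMap.prod (Δ1W ∘ₗ LinearMap.fst (ZMod 2) P Q) (LinearMap.snd (ZMod 2) P Q)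

/-- `𝐛₁^V : X → Y = P ⊕ C`, `p + q ↦ p + b₁^V(Δ₁^W(p)) + b₁^V(q)`. -/
def boldB1V (Δ1W : P →ₗ[ZMod 2] C') (b1V : (C' × Q) →ₗ[ZMod 2] C) :
    (P × Q) →ₗ[ZMod 2] P × C :=
  LinearMap.prod (LinearMap.fst (ZMod 2) P Q) (b1V ∘ₗ boldDelta1W Δ1W)

/-- `𝚫₁^{W⊂W} : Y → 𝔠 = C′ ⊕ C`, `p + c ↦ Δ₁^W(p) + c`. -/
def delta1WW (Δ1W : P →ₗ[ZMod 2] C') : (P × C) →ₗ[ZMod 2] C' × C :=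
  LinearMap.prod (Δ1W ∘ₗ LinearMap.fst (ZMod 2) P C) (LinearMap.snd (ZMod 2) P C)

/-- `𝐛₁^{V⊂V} : Z → 𝔠`, `c′ + q ↦ c′ + b₁^V(c′) + b₁^V(q)`. -/
def b1VV (b1V : (C' × Q) →ₗ[ZMod 2] C) : (C' × Q) →ₗ[ZMod 2] C' × C :=
  LinearMap.prod (LinearMap.fst (ZMod 2) C' Q) b1V

/-- `m₁^{V⊙W} := m₁^{W,+0}∘𝐛₁^V + m₁^{V,0−}∘𝚫₁^W : X → X`. -/
def m1VoW (mW0 : (P × C) →ₗ[ZMod 2] P) (mV0 : (C' × Q) →ₗ[ZMod 2] Q)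
    (Δ1W : P →ₗ[ZMod 2] C') (b1V : (C' × Q) →ₗ[ZMod 2] C) :
    (P × Q) →ₗ[ZMod 2] P × Q :=
  LinearMap.prod (mW0 ∘ₗ boldB1V Δ1W b1V) (mV0 ∘ₗ boldDelta1W Δ1W)

/-- The `P`-valued component `m₂^{V⊙W,+0_W}` of `m₂^{V⊙W}`:
`m₂^{W,+0}∘(𝐛₁^V⊗𝐛₁^V) + m₁^{W,+0}∘b₁^V∘Δ₂^W∘(𝐛₁^V⊗𝐛₁^V) + m₁^{W,+0}∘b₂^V∘(𝚫₁^W⊗𝚫₁^W)`. -/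
noncomputable def m2PComp (mW0 : (P × C) →ₗ[ZMod 2] P)
    (Δ1W : P →ₗ[ZMod 2] C') (b1V : (C' × Q) →ₗ[ZMod 2] C)
    (m2W0 : ((P × C) ⊗[ZMod 2] (P × C)) →ₗ[ZMod 2] P)
    (Δ2W : ((P × C) ⊗[ZMod 2] (P × C)) →ₗ[ZMod 2] C')
    (b2V : ((C' × Q) ⊗[ZMod 2] (C' × Q)) →ₗ[ZMod 2] C) :
    ((P × Q) ⊗[ZMod 2] (P × Q)) →ₗ[ZMod 2] P :=
  m2W0 ∘ₗ TensorProduct.map (boldB1V Δ1W b1V) (boldB1V Δ1W b1V)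
    + mW0 ∘ₗ LinearMap.inr (ZMod 2) P C ∘ₗ b1V ∘ₗ LinearMap.inl (ZMod 2) C' Q ∘ₗ Δ2W
        ∘ₗ TensorProduct.map (boldB1V Δ1W b1V) (boldB1V Δ1W b1V)
    + mW0 ∘ₗ LinearMap.inr (ZMod 2) P C ∘ₗ b2V
        ∘ₗ TensorProduct.map (boldDelta1W Δ1W) (boldDelta1W Δ1W)

/-- The `Q`-valued component `m₂^{V⊙W,0_V−}` of `m₂^{V⊙W}`:
`m₂^{V,0−}∘(𝚫₁^W⊗𝚫₁^W) + m₁^{V,0−}∘Δ₂^W∘(𝐛₁^V⊗𝐛₁^V)`. -/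
noncomputable def m2QComp (mV0 : (C' × Q) →ₗ[ZMod 2] Q)
    (Δ1W : P →ₗ[ZMod 2] C') (b1V : (C' × Q) →ₗ[ZMod 2] C)
    (m2V0 : ((C' × Q) ⊗[ZMod 2] (C' × Q)) →ₗ[ZMod 2] Q)
    (Δ2W : ((P × C) ⊗[ZMod 2] (P × C)) →ₗ[ZMod 2] C') :
    ((P × Q) ⊗[ZMod 2] (P × Q)) →ₗ[ZMod 2] Q :=
  m2V0 ∘ₗ TensorProduct.map (boldDelta1W Δ1W) (boldDelta1W Δ1W)
    + mV0 ∘ₗ LinearMap.inl (ZMod 2) C' Q ∘ₗ Δ2W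
        ∘ₗ TensorProduct.map (boldB1V Δ1W b1V) (boldB1V Δ1W b1V)

/-- `m₂^{V⊙W} : X ⊗ X → X`. -/
noncomputable def m2VoW (mW0 : (P × C) →ₗ[ZMod 2] P) (mV0 : (C' × Q) →ₗ[ZMod 2] Q)
    (Δ1W : P →ₗ[ZMod 2] C') (b1V : (C' × Q) →ₗ[ZMod 2] C)
    (m2W0 : ((P × C) ⊗[ZMod 2] (P × C)) →ₗ[ZMod 2] P)
    (m2V0 : ((C' × Q) ⊗[ZMod 2] (C' × Q)) →ₗ[ZMod 2] Q)
    (Δ2W : ((P × C) ⊗[ZMod 2] (P × C)) →ₗ[ZMod 2] C')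
    (b2V : ((C' × Q) ⊗[ZMod 2] (C' × Q)) →ₗ[ZMod 2] C) :
    ((P × Q) ⊗[ZMod 2] (P × Q)) →ₗ[ZMod 2] P × Q :=
  LinearMap.prod (m2PComp mW0 Δ1W b1V m2W0 Δ2W b2V) (m2QComp mV0 Δ1W b1V m2V0 Δ2W)

/-- `𝐛₂^V := b₁^V∘Δ₂^W∘(𝐛₁^V⊗𝐛₁^V) + b₂^V∘(𝚫₁^W⊗𝚫₁^W) : X⊗X → Y` (values in `C ⊆ Y`,
with `Δ₂^W` composed with the inclusion `C′ ⊆ Z`). -/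
noncomputable def boldB2V (Δ1W : P →ₗ[ZMod 2] C') (b1V : (C' × Q) →ₗ[ZMod 2] C)
    (Δ2W : ((P × C) ⊗[ZMod 2] (P × C)) →ₗ[ZMod 2] C')
    (b2V : ((C' × Q) ⊗[ZMod 2] (C' × Q)) →ₗ[ZMod 2] C) :
    ((P × Q) ⊗[ZMod 2] (P × Q)) →ₗ[ZMod 2] P × C :=
  LinearMap.inr (ZMod 2) P C
    ∘ₗ (b1V ∘ₗ LinearMap.inl (ZMod 2) C' Q ∘ₗ Δ2W
          ∘ₗ TensorProduct.map (boldB1V Δ1W b1V) (boldB1V Δ1W b1V)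
        + b2V ∘ₗ TensorProduct.map (boldDelta1W Δ1W) (boldDelta1W Δ1W))

private theorem split_pair {A B M : Type*} [AddCommGroup A] [Module (ZMod 2) A]
    [AddCommGroup B] [Module (ZMod 2) B] [AddCommGroup M] [Module (ZMod 2) M]
    (f : (A × B) →ₗ[ZMod 2] M) (a : A) (b : B) :
    f (a, b) = (f ∘ₗ LinearMap.inl (ZMod 2) A B) a + (f ∘ₗ LinearMap.inr (ZMod 2) A B) b := by
  rw [LinearMap.comp_apply, LinearMap.comp_apply, LinearMap.inl_apply, LinearMap.inr_apply,
    ← map_add, Prod.mk_add_mk, add_zero, zero_add]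

private theorem add_self_char2 {M : Type*} [AddCommGroup M] [Module (ZMod 2) M] (a : M) :
    a + a = 0 := by
  have h := two_smul (ZMod 2) a
  rw [show (2 : ZMod 2) = 0 by decide, zero_smul] at h
  exact h.symm

private theorem add_eq_zero_of_eq' {M : Type*} [AddCommGroup M] [Module (ZMod 2) M] {a b : M}
    (h : a = b) : a + b = 0 := by rw [h]; exact add_self_char2 b

/-- Equation (36) in the proof of Proposition 6.1 of Legout's paper:
`𝐛₂^V∘(m₁^{V⊙W}⊗id) + 𝐛₂^V∘(id⊗m₁^{V⊙W}) + 𝐛₁^V∘m₂^{V⊙W} + m₂^W∘(𝐛₁^V⊗𝐛₁^V) + m₁^W∘𝐛₂^V = 0`. -/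
theorem transfer_boldB_product
    (mW0 : (P × C) →ₗ[ZMod 2] P) (mWm : (P × C) →ₗ[ZMod 2] C)
    (mVp : (C' × Q) →ₗ[ZMod 2] C') (mV0 : (C' × Q) →ₗ[ZMod 2] Q)
    (Δ1W : P →ₗ[ZMod 2] C') (b1V : (C' × Q) →ₗ[ZMod 2] C)
    (Δ1L : C' →ₗ[ZMod 2] C') (b1L : (C' × C) →ₗ[ZMod 2] C)
    (m2W0 : ((P × C) ⊗[ZMod 2] (P × C)) →ₗ[ZMod 2] P)
    (m2Wm : ((P × C) ⊗[ZMod 2] (P × C)) →ₗ[ZMod 2] C)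
    (m2Vp : ((C' × Q) ⊗[ZMod 2] (C' × Q)) →ₗ[ZMod 2] C')
    (m2V0 : ((C' × Q) ⊗[ZMod 2] (C' × Q)) →ₗ[ZMod 2] Q)
    (Δ2W : ((P × C) ⊗[ZMod 2] (P × C)) →ₗ[ZMod 2] C')
    (b2V : ((C' × Q) ⊗[ZMod 2] (C' × Q)) →ₗ[ZMod 2] C)
    (Δ2L : ((C' × C) ⊗[ZMod 2] (C' × C)) →ₗ[ZMod 2] C')
    (b2L : ((C' × C) ⊗[ZMod 2] (C' × C)) →ₗ[ZMod 2] C)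
    -- (D1) m₁^W ∘ m₁^W = 0
    (hD1 : (LinearMap.prod mW0 mWm) ∘ₗ (LinearMap.prod mW0 mWm) = 0)
    -- (D2) m₁^V ∘ m₁^V = 0
    (hD2 : (LinearMap.prod mVp mV0) ∘ₗ (LinearMap.prod mVp mV0) = 0)
    -- (S1) m₁^{W,−} = b₁^Λ ∘ 𝚫₁^{W⊂W}
    (hS1 : mWm = b1L ∘ₗ delta1WW Δ1W)
    -- (S2) m₁^{V,+} = Δ₁^Λ ∘ π_{C′}
    (hS2 : mVp = Δ1L ∘ₗ LinearMap.fst (ZMod 2) C' Q)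
    -- (R1) Δ₁^W ∘ m₁^{W,+0} = Δ₁^Λ ∘ Δ₁^W ∘ π_P
    (hR1 : Δ1W ∘ₗ mW0 = (Δ1L ∘ₗ Δ1W) ∘ₗ LinearMap.fst (ZMod 2) P C)
    -- (R2) b₁^V ∘ m₁^V = b₁^Λ ∘ 𝐛₁^{V⊂V}
    (hR2 : b1V ∘ₗ (LinearMap.prod mVp mV0) = b1L ∘ₗ b1VV b1V)
    -- (L1)
    (hL1 : m2W0 ∘ₗ LinearMap.rTensor (P × C) (LinearMap.prod mW0 mWm)
      + m2W0 ∘ₗ LinearMap.lTensor (P × C) (LinearMap.prod mW0 mWm)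
      + mW0 ∘ₗ LinearMap.prod m2W0 m2Wm = 0)
    -- (L2)
    (hL2 : m2V0 ∘ₗ LinearMap.rTensor (C' × Q) (LinearMap.prod mVp mV0)
      + m2V0 ∘ₗ LinearMap.lTensor (C' × Q) (LinearMap.prod mVp mV0)
      + mV0 ∘ₗ LinearMap.prod m2Vp m2V0 = 0)
    -- (L3)
    (hL3 : Δ2W ∘ₗ LinearMap.rTensor (P × C) (LinearMap.prod mW0 mWm)
      + Δ2W ∘ₗ LinearMap.lTensor (P × C) (LinearMap.prod mW0 mWm)
      + Δ1W ∘ₗ m2W0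
      + Δ2L ∘ₗ TensorProduct.map (delta1WW Δ1W) (delta1WW Δ1W)
      + Δ1L ∘ₗ Δ2W = 0)
    -- (L4)
    (hL4 : b2V ∘ₗ LinearMap.rTensor (C' × Q) (LinearMap.prod mVp mV0)
      + b2V ∘ₗ LinearMap.lTensor (C' × Q) (LinearMap.prod mVp mV0)
      + b1V ∘ₗ LinearMap.prod m2Vp m2V0
      + b2L ∘ₗ TensorProduct.map (b1VV b1V) (b1VV b1V)
      + b1L ∘ₗ LinearMap.inr (ZMod 2) C' C ∘ₗ b2V = 0)
    -- (S1′)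
    (hS1' : m2Wm = b1L ∘ₗ LinearMap.inl (ZMod 2) C' C ∘ₗ Δ2W
      + b2L ∘ₗ TensorProduct.map (delta1WW Δ1W) (delta1WW Δ1W))
    -- (S2′)
    (hS2' : m2Vp = Δ2L ∘ₗ TensorProduct.map (b1VV b1V) (b1VV b1V)) :
    (boldB2V Δ1W b1V Δ2W b2V) ∘ₗ LinearMap.rTensor (P × Q) (m1VoW mW0 mV0 Δ1W b1V)
      + (boldB2V Δ1W b1V Δ2W b2V) ∘ₗ LinearMap.lTensor (P × Q) (m1VoW mW0 mV0 Δ1W b1V)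
      + (boldB1V Δ1W b1V) ∘ₗ (m2VoW mW0 mV0 Δ1W b1V m2W0 m2V0 Δ2W b2V)
      + (LinearMap.prod m2W0 m2Wm)
          ∘ₗ TensorProduct.map (boldB1V Δ1W b1V) (boldB1V Δ1W b1V)
      + (LinearMap.prod mW0 mWm) ∘ₗ (boldB2V Δ1W b1V Δ2W b2V) = 0 := by
  subst hS1 hS2 hS1' hS2'
  refine TensorProduct.ext' fun x y => ?_
  have hR1' : ∀ v : P × C, Δ1W (mW0 v) = Δ1L (Δ1W v.1) := fun v => by
    simpa using LinearMap.congr_fun hR1 v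
  have hR2' : ∀ (c' : C') (q : Q), b1V (Δ1L c', mV0 (c', q)) = b1L (c', b1V (c', q)) :=
    fun c' q => by simpa [b1VV] using LinearMap.congr_fun hR2 (c', q)
  have f1 := congrArg (fun c' : C' => b1V (c', (0 : Q)))
    (LinearMap.congr_fun hL3
      (((x.1, b1V (Δ1W x.1, x.2)) : P × C) ⊗ₜ[ZMod 2] ((y.1, b1V (Δ1W y.1, y.2)) : P × C)))
  have f2 := LinearMap.congr_fun hL4
    (((Δ1W x.1, x.2) : C' × Q) ⊗ₜ[ZMod 2] ((Δ1W y.1, y.2) : C' × Q))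
  have f3 := add_eq_zero_of_eq' (LinearMap.congr_fun hR2
    ((Δ2W (((x.1, b1V (Δ1W x.1, x.2)) : P × C) ⊗ₜ[ZMod 2]
      ((y.1, b1V (Δ1W y.1, y.2)) : P × C)), (0 : Q))))
  simp only [boldB2V, boldB1V, boldDelta1W, delta1WW, b1VV, m1VoW, m2VoW, m2PComp, m2QComp,
    LinearMap.add_apply, LinearMap.comp_apply, LinearMap.rTensor_tmul, LinearMap.lTensor_tmul,
    TensorProduct.map_tmul, LinearMap.prod_apply, Function.prod, LinearMap.coe_inl, LinearMap.coe_inr,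
    LinearMap.fst_apply, LinearMap.snd_apply, LinearMap.zero_apply, map_add, map_zero,
    Prod.mk_add_mk, Prod.fst_add, Prod.snd_add, LinearMap.id_apply, zero_add, add_zero]
    at f1 f2 f3 ⊢
  simp only [hR1', hR2', map_zero, zero_add, add_zero]
  simp only [split_pair, map_add, map_zero, add_zero, zero_add] at f1 f2 f3 ⊢
  rw [Prod.mk_eq_zero]
  refine ⟨?_, ?_⟩
  · conv_rhs => rw [show (0 : P) = (1 : ZMod 2) • (0 : P) by simp]
    match_scalars <;> decide
  · have hsum := congrArg₂ (· + ·) (congrArg₂ (· + ·) f1 f2) f3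
    simp only [add_zero] at hsum
    have hsum1 := congrArg (fun t : C => (1 : ZMod 2) • t) hsum
    simp only [smul_zero] at hsum1
    conv_rhs => rw [← hsum1]
    match_scalars <;> decide

end LegoutStmt7
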